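/- arXiv:2112.03056 — 6 statements merged into one kernel-verified Lean document; each statement's English description precedes it below -/
import Mathlib

section
/- Let K be a convex body in ℝ^d, let p be a point in the interior of K, and let r ≥ 0. Then the Hilbert ball B_K(p,r) = { q ∈ interior(K) : H_K(p,q) ≤ r } is a convex set. -/
/-- `H` is the Hilbert metric of the convex body `K`: `H p p = 0` for interior points,
and for distinct interior points `p, q`, letting `x` and `y` be the boundary points of the
chord of `K` through `p` and `q`, in the order `⟨x, p, q, y⟩`,
`H p q = (1/2) · ln ((‖p - y‖·‖q - x‖)/(‖q - y‖·‖p - x‖))`. -/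
def IsHilbertDist {d : ℕ} (K : Set (EuclideanSpace ℝ (Fin d)))
    (H : EuclideanSpace ℝ (Fin d) → EuclideanSpace ℝ (Fin d) → ℝ) : Prop :=
  (∀ p ∈ interior K, H p p = 0) ∧
  (∀ p ∈ interior K, ∀ q ∈ interior K, p ≠ q →
    ∃ x ∈ frontier K, ∃ y ∈ frontier K,
      p ∈ openSegment ℝ x q ∧ q ∈ openSegment ℝ p y ∧
      H p q = (1 / 2) * Real.log ((‖p - y‖ * ‖q - x‖) / (‖q - y‖ * ‖p - x‖)))

/-- A supporting functional at a frontier point of a convex body. -/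
private lemma support_exists {d : ℕ} {K : Set (EuclideanSpace ℝ (Fin d))}
    (hKcl : IsClosed K) (hKconv : Convex ℝ K) (hKint : (interior K).Nonempty)
    {x : EuclideanSpace ℝ (Fin d)} (hx : x ∈ frontier K) :
    ∃ f : EuclideanSpace ℝ (Fin d) →L[ℝ] ℝ,
      (∀ u ∈ interior K, f u < f x) ∧ ∀ u ∈ K, f u ≤ f x := by
  have hxint : x ∉ interior K := hx.2
  obtain ⟨f, hf⟩ := geometric_hahn_banach_open_point hKconv.interior isOpen_interior hxint
  refine ⟨f, hf, fun u hu => ?_⟩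
  obtain ⟨z, hz⟩ := hKint
  have hucl : u ∈ closure (interior K) := by
    rw [mem_closure_iff_seq_limit]
    refine ⟨fun n => u + (1 / ((n : ℝ) + 1)) • (z - u), fun n => ?_, ?_⟩
    · refine hKconv.add_smul_sub_mem_interior hu hz ⟨by positivity, ?_⟩
      rw [div_le_one (by positivity)]
      linarith [Nat.cast_nonneg (α := ℝ) n]
    · have h1 : Filter.Tendsto (fun n : ℕ => 1 / ((n : ℝ) + 1)) Filter.atTop (nhds 0) :=
        tendsto_one_div_add_atTop_nhds_zero_nat
      have h2 := (h1.smul_const (z - u)).const_add u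
      simpa using h2
  exact (closure_minimal (fun v hv => le_of_lt (hf v hv))
    (isClosed_le f.continuous continuous_const)) hucl

set_option maxHeartbeats 1000000 in
/-- Key bound: for interior points `p, w` with `H p w ≤ r`, and supporting functionals
`f` at `x`, `g` at `y`, the affine expression is controlled. -/
private lemma key_bound {d : ℕ} {K : Set (EuclideanSpace ℝ (Fin d))}
    (hKcl : IsClosed K)
    {H : EuclideanSpace ℝ (Fin d) → EuclideanSpace ℝ (Fin d) → ℝ}
    (hH2 : ∀ p ∈ interior K, ∀ q ∈ interior K, p ≠ q →
      ∃ x ∈ frontier K, ∃ y ∈ frontier K,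
        p ∈ openSegment ℝ x q ∧ q ∈ openSegment ℝ p y ∧
        H p q = (1 / 2) * Real.log ((‖p - y‖ * ‖q - x‖) / (‖q - y‖ * ‖p - x‖)))
    {p w : EuclideanSpace ℝ (Fin d)} (hp : p ∈ interior K) (hw : w ∈ interior K)
    {f g : EuclideanSpace ℝ (Fin d) →L[ℝ] ℝ} {x y : EuclideanSpace ℝ (Fin d)}
    (hf1 : ∀ u ∈ interior K, f u < f x) (hf2 : ∀ u ∈ K, f u ≤ f x)
    (hg1 : ∀ u ∈ interior K, g u < g y) (hg2 : ∀ u ∈ K, g u ≤ g y)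
    {r : ℝ} (hr : 0 ≤ r) (hHw : H p w ≤ r) :
    (f x - f w) * (g y - g p) ≤ Real.exp (2 * r) * ((f x - f p) * (g y - g w)) := by
  have hFp : 0 < f x - f p := sub_pos.2 (hf1 p hp)
  have hFw : 0 < f x - f w := sub_pos.2 (hf1 w hw)
  have hGp : 0 < g y - g p := sub_pos.2 (hg1 p hp)
  have hGw : 0 < g y - g w := sub_pos.2 (hg1 w hw)
  have hexp1 : (1 : ℝ) ≤ Real.exp (2 * r) := Real.one_le_exp (by linarith)
  by_cases hpw : p = w
  · subst hpw
    nlinarith [mul_pos hFp hGp]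
  · obtain ⟨x', hx', y', hy', hpseg, hwseg, heq⟩ := hH2 p hp w hw hpw
    obtain ⟨a, b, ha, hb, hab, habp⟩ := hpseg
    obtain ⟨c, e, hc, he, hce, hcew⟩ := hwseg
    have h1 : p - x' = b • (w - x') := by
      rw [← habp, smul_sub, show a = 1 - b by linarith, sub_smul, one_smul]; abel
    have h2 : w - y' = c • (p - y') := by
      rw [← hcew, smul_sub, show e = 1 - c by linarith, sub_smul, one_smul]; abel
    have hn1 : ‖p - x'‖ = b * ‖w - x'‖ := by
      rw [h1, norm_smul, Real.norm_eq_abs, abs_of_pos hb]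
    have hn2 : ‖w - y'‖ = c * ‖p - y'‖ := by
      rw [h2, norm_smul, Real.norm_eq_abs, abs_of_pos hc]
    have hwx' : w ≠ x' := fun h => hx'.2 (h ▸ hw)
    have hpy' : p ≠ y' := fun h => hy'.2 (h ▸ hp)
    have hnwx : 0 < ‖w - x'‖ := norm_sub_pos_iff.2 hwx'
    have hnpy : 0 < ‖p - y'‖ := norm_sub_pos_iff.2 hpy'
    have hnpx : 0 < ‖p - x'‖ := by rw [hn1]; positivity
    have hnwy : 0 < ‖w - y'‖ := by rw [hn2]; positivity
    have hfp' : f p = a * f x' + b * f w := by rw [← habp]; simp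
    have hgw' : g w = c * g p + e * g y' := by rw [← hcew]; simp
    have hfx' : f x' ≤ f x := hf2 x' (hKcl.frontier_subset hx')
    have hgy' : g y' ≤ g y := hg2 y' (hKcl.frontier_subset hy')
    have hFeq : f x - f p = a * (f x - f x') + b * (f x - f w) := by
      linear_combination -hfp' - f x * hab
    have hGeq : g y - g w = c * (g y - g p) + e * (g y - g y') := by
      linear_combination -hgw' - g y * hce
    have hFineq : b * (f x - f w) ≤ f x - f p := by
      nlinarith [mul_nonneg ha.le (sub_nonneg.2 hfx')]
    have hGineq : c * (g y - g p) ≤ g y - g w := by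
      nlinarith [mul_nonneg he.le (sub_nonneg.2 hgy')]
    -- cross-ratio bound
    have hDpos : 0 < ‖w - y'‖ * ‖p - x'‖ := mul_pos hnwy hnpx
    have hNpos : 0 < ‖p - y'‖ * ‖w - x'‖ := mul_pos hnpy hnwx
    have hlog : Real.log ((‖p - y'‖ * ‖w - x'‖) / (‖w - y'‖ * ‖p - x'‖)) ≤ 2 * r := by
      rw [heq] at hHw; linarith
    have hND : (‖p - y'‖ * ‖w - x'‖) / (‖w - y'‖ * ‖p - x'‖) ≤ Real.exp (2 * r) :=
      (Real.log_le_iff_le_exp (by positivity)).1 hlog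
    have hND' : ‖p - y'‖ * ‖w - x'‖ ≤ Real.exp (2 * r) * (‖w - y'‖ * ‖p - x'‖) := by
      rw [div_le_iff₀ hDpos] at hND; linarith
    -- combine
    have step1 : (f x - f w) * (g y - g p) * (‖w - y'‖ * ‖p - x'‖)
        = (b * (f x - f w)) * (c * (g y - g p)) * (‖p - y'‖ * ‖w - x'‖) := by
      rw [hn1, hn2]; ring
    have step2 : (b * (f x - f w)) * (c * (g y - g p)) * (‖p - y'‖ * ‖w - x'‖)
        ≤ ((f x - f p) * (g y - g w)) * (‖p - y'‖ * ‖w - x'‖) := by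
      refine mul_le_mul_of_nonneg_right ?_ hNpos.le
      exact mul_le_mul hFineq hGineq (by positivity) hFp.le
    have step3 : ((f x - f p) * (g y - g w)) * (‖p - y'‖ * ‖w - x'‖)
        ≤ ((f x - f p) * (g y - g w)) * (Real.exp (2 * r) * (‖w - y'‖ * ‖p - x'‖)) :=
      mul_le_mul_of_nonneg_left hND' (by positivity)
    have final : (f x - f w) * (g y - g p) * (‖w - y'‖ * ‖p - x'‖)
        ≤ (Real.exp (2 * r) * ((f x - f p) * (g y - g w))) * (‖w - y'‖ * ‖p - x'‖) := by
      calc (f x - f w) * (g y - g p) * (‖w - y'‖ * ‖p - x'‖)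
          = (b * (f x - f w)) * (c * (g y - g p)) * (‖p - y'‖ * ‖w - x'‖) := step1
        _ ≤ ((f x - f p) * (g y - g w)) * (‖p - y'‖ * ‖w - x'‖) := step2
        _ ≤ ((f x - f p) * (g y - g w)) * (Real.exp (2 * r) * (‖w - y'‖ * ‖p - x'‖)) := step3
        _ = (Real.exp (2 * r) * ((f x - f p) * (g y - g w))) * (‖w - y'‖ * ‖p - x'‖) := by ring
    exact le_of_mul_le_mul_right final hDpos

set_option maxHeartbeats 1000000 in
/-- Hilbert balls in a convex body are convex. -/
theorem hilbert_ball_convex {d : ℕ} (K : Set (EuclideanSpace ℝ (Fin d)))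
    (hKcomp : IsCompact K) (hKconv : Convex ℝ K) (hKint : (interior K).Nonempty)
    (H : EuclideanSpace ℝ (Fin d) → EuclideanSpace ℝ (Fin d) → ℝ)
    (hH : IsHilbertDist K H)
    (p : EuclideanSpace ℝ (Fin d)) (hp : p ∈ interior K) (r : ℝ) (hr : 0 ≤ r) :
    Convex ℝ {q | q ∈ interior K ∧ H p q ≤ r} := by
  obtain ⟨hH0, hH2⟩ := hH
  have hKcl : IsClosed K := hKcomp.isClosed
  intro q1 hq1 q2 hq2 s t hs ht hst
  obtain ⟨hq1i, hq1r⟩ := hq1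
  obtain ⟨hq2i, hq2r⟩ := hq2
  have hqi : s • q1 + t • q2 ∈ interior K := hKconv.interior hq1i hq2i hs ht hst
  refine ⟨hqi, ?_⟩
  set q := s • q1 + t • q2 with hqdef
  by_cases hpq : p = q
  · rw [← hpq, hH0 p hp]; exact hr
  obtain ⟨x, hx, y, hy, hpseg, hqseg, heq⟩ := hH2 p hp q hqi hpq
  obtain ⟨f, hf1, hf2⟩ := support_exists hKcl hKconv hKint hx
  obtain ⟨g, hg1, hg2⟩ := support_exists hKcl hKconv hKint hy
  have key1 := key_bound hKcl hH2 hp hq1i hf1 hf2 hg1 hg2 hr hq1r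
  have key2 := key_bound hKcl hH2 hp hq2i hf1 hf2 hg1 hg2 hr hq2r
  have hfq : f q = s * f q1 + t * f q2 := by
    rw [hqdef]; simp
  have hgq : g q = s * g q1 + t * g q2 := by
    rw [hqdef]; simp
  have ht' : t = 1 - s := by linarith
  have e1 : (f x - f q) * (g y - g p) - Real.exp (2 * r) * ((f x - f p) * (g y - g q))
      = s * ((f x - f q1) * (g y - g p) - Real.exp (2 * r) * ((f x - f p) * (g y - g q1)))
      + t * ((f x - f q2) * (g y - g p) - Real.exp (2 * r) * ((f x - f p) * (g y - g q2))) := by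
    rw [hfq, hgq, ht']; ring
  have hphi : (f x - f q) * (g y - g p) ≤ Real.exp (2 * r) * ((f x - f p) * (g y - g q)) := by
    nlinarith [mul_nonneg hs (sub_nonneg.2 key1), mul_nonneg ht (sub_nonneg.2 key2)]
  -- identities along the chord through p and q
  have hFp : 0 < f x - f p := sub_pos.2 (hf1 p hp)
  have hFq : 0 < f x - f q := sub_pos.2 (hf1 q hqi)
  have hGp : 0 < g y - g p := sub_pos.2 (hg1 p hp)
  have hGq : 0 < g y - g q := sub_pos.2 (hg1 q hqi)
  obtain ⟨a, b, hha, hhb, hab, habp⟩ := hpseg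
  obtain ⟨c, e, hhc, hhe, hce, hceq⟩ := hqseg
  have h1 : p - x = b • (q - x) := by
    rw [← habp, smul_sub, show a = 1 - b by linarith, sub_smul, one_smul]; abel
  have h2 : q - y = c • (p - y) := by
    rw [← hceq, smul_sub, show e = 1 - c by linarith, sub_smul, one_smul]; abel
  have hn1 : ‖p - x‖ = b * ‖q - x‖ := by
    rw [h1, norm_smul, Real.norm_eq_abs, abs_of_pos hhb]
  have hn2 : ‖q - y‖ = c * ‖p - y‖ := by
    rw [h2, norm_smul, Real.norm_eq_abs, abs_of_pos hhc]
  have hfp' : f p = a * f x + b * f q := by rw [← habp]; simp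
  have hgq' : g q = c * g p + e * g y := by rw [← hceq]; simp
  have hFid : f x - f p = b * (f x - f q) := by
    linear_combination (-(f x)) * hab - hfp'
  have hGid : g y - g q = c * (g y - g p) := by
    linear_combination (-(g y)) * hce - hgq'
  have hqx : q ≠ x := fun h => hx.2 (h ▸ hqi)
  have hpy : p ≠ y := fun h => hy.2 (h ▸ hp)
  have hnqx : 0 < ‖q - x‖ := norm_sub_pos_iff.2 hqx
  have hnpy : 0 < ‖p - y‖ := norm_sub_pos_iff.2 hpy
  have hnpx : 0 < ‖p - x‖ := by rw [hn1]; positivity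
  have hnqy : 0 < ‖q - y‖ := by rw [hn2]; positivity
  -- from hphi deduce 1 ≤ exp(2r) * b * c
  have h3 : 1 ≤ Real.exp (2 * r) * (b * c) := by
    rw [hFid, hGid] at hphi
    nlinarith [mul_pos hFq hGp]
  have hkey : ‖p - y‖ * ‖q - x‖ ≤ Real.exp (2 * r) * (‖q - y‖ * ‖p - x‖) := by
    rw [hn1, hn2]
    nlinarith [mul_pos hnpy hnqx]
  rw [heq]
  have hDpos : 0 < ‖q - y‖ * ‖p - x‖ := mul_pos hnqy hnpx
  have hlog : Real.log ((‖p - y‖ * ‖q - x‖) / (‖q - y‖ * ‖p - x‖)) ≤ 2 * r := by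
    rw [Real.log_le_iff_le_exp (by positivity), div_le_iff₀ hDpos]
    linarith
  linarith
end

section
/- Let K be a convex polytope in ℝ^d that is the intersection of m closed halfspaces and is a convex body (compact with nonempty interior), let p be a point in the interior of K, and let r ≥ 0. Then the Hilbert ball B_K(p,r) is a convex polytope that can be expressed as the intersection of at most m(m−1) closed halfspaces. -/
open scoped RealInnerProductSpace in
lemma interior_halfspace_aux {d : ℕ} (a : EuclideanSpace ℝ (Fin d)) (ha : a ≠ 0) (c : ℝ) :
    interior {x : EuclideanSpace ℝ (Fin d) | ⟪a, x⟫ ≤ c} = {x | ⟪a, x⟫ < c} := by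
  have hs : Function.Surjective (innerSL ℝ a) := by
    intro t
    refine ⟨(t / ⟪a, a⟫) • a, ?_⟩
    have h : (⟪a, a⟫ : ℝ) ≠ 0 := inner_self_ne_zero.mpr ha
    rw [innerSL_apply_apply, real_inner_smul_right, div_mul_cancel₀ _ h]
  have h2 := (innerSL ℝ a).interior_preimage hs (Set.Iic c)
  rw [interior_Iic] at h2
  have e1 : {x : EuclideanSpace ℝ (Fin d) | ⟪a, x⟫ ≤ c} = (innerSL ℝ a) ⁻¹' Set.Iic c := rfl
  have e2 : {x : EuclideanSpace ℝ (Fin d) | ⟪a, x⟫ < c} = (innerSL ℝ a) ⁻¹' Set.Iio c := rfl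
  rw [e1, e2, h2]

set_option maxHeartbeats 1000000 in
open scoped RealInnerProductSpace in
/-- If `K` is a convex body in `ℝ^d` that is the intersection of `m` closed halfspaces,
then each Hilbert ball in `K` is a convex polytope expressible as the intersection of
at most `m (m - 1)` closed halfspaces. -/
theorem hilbert_ball_polytope {d m : ℕ} (K : Set (EuclideanSpace ℝ (Fin d)))
    (hKcomp : IsCompact K) (hKconv : Convex ℝ K) (hKint : (interior K).Nonempty)
    (a : Fin m → EuclideanSpace ℝ (Fin d)) (b : Fin m → ℝ)
    (hKdef : K = ⋂ i : Fin m, {x : EuclideanSpace ℝ (Fin d) | ⟪a i, x⟫ ≤ b i})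
    (H : EuclideanSpace ℝ (Fin d) → EuclideanSpace ℝ (Fin d) → ℝ)
    (hH : IsHilbertDist K H)
    (p : EuclideanSpace ℝ (Fin d)) (hp : p ∈ interior K) (r : ℝ) (hr : 0 ≤ r) :
    Convex ℝ {q | q ∈ interior K ∧ H p q ≤ r} ∧
    IsCompact {q | q ∈ interior K ∧ H p q ≤ r} ∧
    ∃ n : ℕ, n ≤ m * (m - 1) ∧
      ∃ (a' : Fin n → EuclideanSpace ℝ (Fin d)) (b' : Fin n → ℝ),
        {q | q ∈ interior K ∧ H p q ≤ r} =
          ⋂ i : Fin n, {x : EuclideanSpace ℝ (Fin d) | ⟪a' i, x⟫ ≤ b' i} := by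
  classical
  obtain ⟨E, hE_def⟩ : ∃ E : ℝ, E = Real.exp (2 * r) := ⟨_, rfl⟩
  have hEpos : 0 < E := hE_def ▸ Real.exp_pos _
  have hE1 : 1 ≤ E := hE_def ▸ Real.one_le_exp (by linarith)
  obtain ⟨s, hs_def⟩ : ∃ s : Fin m → EuclideanSpace ℝ (Fin d) → ℝ,
      ∀ i x, s i x = b i - ⟪a i, x⟫ := ⟨_, fun _ _ => rfl⟩
  have hKclosed : IsClosed K := hKcomp.isClosed
  have hmemK : ∀ x, x ∈ K ↔ ∀ i, 0 ≤ s i x := by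
    intro x; rw [hKdef]; simp [Set.mem_iInter, hs_def, sub_nonneg]
  have hpK : p ∈ K := interior_subset hp
  have hbnn : ∀ i, a i = 0 → 0 ≤ b i := by
    intro i hi
    have h := (hmemK p).mp hpK i
    simpa [hs_def, hi, inner_zero_left] using h
  have hint : ∀ x, x ∈ interior K ↔ ∀ i, a i ≠ 0 → 0 < s i x := by
    intro x
    rw [hKdef, interior_iInter_of_finite]
    simp only [Set.mem_iInter]
    constructor
    · intro h i hi
      have h2 := h i
      rw [interior_halfspace_aux (a i) hi (b i)] at h2
      simpa [hs_def, sub_pos] using h2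
    · intro h i
      by_cases hi : a i = 0
      · have huniv : {x : EuclideanSpace ℝ (Fin d) | ⟪a i, x⟫ ≤ b i} = Set.univ := by
          ext z; simp [hi, inner_zero_left, hbnn i hi]
        rw [huniv]; simp
      · rw [interior_halfspace_aux (a i) hi (b i)]
        have h2 := h i hi
        simp only [hs_def, sub_pos] at h2
        exact h2
  have hspos : ∀ i, a i ≠ 0 → 0 < s i p := fun i hi => (hint p).mp hp i hi
  have hcombo : ∀ (i : Fin m) (α β : ℝ), α + β = 1 →
      ∀ u v : EuclideanSpace ℝ (Fin d), s i (α • u + β • v) = α * s i u + β * s i v := by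
    intro i α β hsum u v
    have h1 : (⟪a i, α • u + β • v⟫ : ℝ) = α * ⟪a i, u⟫ + β * ⟪a i, v⟫ := by
      rw [inner_add_right, real_inner_smul_right, real_inner_smul_right]
    simp only [hs_def, h1]
    linear_combination (-(b i)) * hsum
  have hfacet : ∀ y ∈ frontier K, (∀ i, 0 ≤ s i y) ∧ ∃ i, s i y = 0 ∧ 0 < s i p := by
    intro y hy
    rw [hKclosed.frontier_eq] at hy
    have hyK : y ∈ K := hy.1
    refine ⟨(hmemK y).mp hyK, ?_⟩
    have hyni : y ∉ interior K := hy.2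
    rw [hint y] at hyni
    push_neg at hyni
    obtain ⟨i, hi, hle⟩ := hyni
    exact ⟨i, le_antisymm hle ((hmemK y).mp hyK i), hspos i hi⟩
  -- main structural extraction for q ≠ p
  have main : ∀ q, q ∈ interior K → p ≠ q →
      ∃ α e : ℝ, ∃ i0 k0 : Fin m,
        0 < α ∧ α < 1 ∧ 0 < e ∧ e < 1 ∧ 0 < s i0 p ∧ 0 < s k0 q ∧ i0 ≠ k0 ∧
        s i0 q = α * s i0 p ∧ s k0 p = e * s k0 q ∧
        (∀ i, s i p * s i0 q ≤ s i0 p * s i q) ∧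
        (∀ j, s j q * s k0 p ≤ s k0 q * s j p) ∧
        H p q = (1 / 2) * Real.log (1 / (α * e)) := by
    intro q hq hpq
    obtain ⟨x, hx, y, hy, hpseg, hqseg, hHeq⟩ := hH.2 p hp q hq hpq
    obtain ⟨α, β, hα, hβ, hαβ, heqy⟩ := hqseg
    obtain ⟨c, e, hc, he, hce, heqx⟩ := hpseg
    have hβ1 : β = 1 - α := by linarith
    have hc1 : c = 1 - e := by linarith
    subst hβ1; subst hc1
    have hα1 : α < 1 := by linarith
    have he1 : e < 1 := by linarith
    obtain ⟨hsy, i0, hi0y, hi0p⟩ := hfacet y hy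
    obtain ⟨hsx, k0, hk0x, hk0p⟩ := hfacet x hx
    have hyni : y ∉ interior K := by
      rw [hKclosed.frontier_eq] at hy; exact hy.2
    have hxni : x ∉ interior K := by
      rw [hKclosed.frontier_eq] at hx; exact hx.2
    have hpy : p ≠ y := fun h => hyni (h ▸ hp)
    have hqx : q ≠ x := fun h => hxni (h ▸ hq)
    have hsq : ∀ i, s i q = α * s i p + (1 - α) * s i y := by
      intro i; rw [← heqy]; exact hcombo i α (1 - α) (by ring) p y
    have hsp : ∀ i, s i p = (1 - e) * s i x + e * s i q := by
      intro i; rw [← heqx]; exact hcombo i (1 - e) e (by ring) x q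
    have hi0q : s i0 q = α * s i0 p := by rw [hsq i0, hi0y]; ring
    have hk0peq : s k0 p = e * s k0 q := by rw [hsp k0, hk0x]; ring
    have hk0q : 0 < s k0 q := by
      have h0 : 0 < e * s k0 q := hk0peq ▸ hk0p
      rcases mul_pos_iff.mp h0 with ⟨_, h⟩ | ⟨h, _⟩
      · exact h
      · linarith
    have hne : i0 ≠ k0 := by
      intro h
      subst h
      have heα : α * e < 1 := by nlinarith
      have hid : s i0 p = (e * α) * s i0 p := by
        calc s i0 p = e * s i0 q := hk0peq
          _ = (e * α) * s i0 p := by rw [hi0q]; ring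
      nlinarith [hi0p, heα, hid]
    have h1 : ∀ i, s i p * s i0 q ≤ s i0 p * s i q := by
      intro i
      rw [hi0q, hsq i]
      nlinarith [mul_nonneg (mul_nonneg (by linarith : (0:ℝ) ≤ 1 - α) hi0p.le) (hsy i)]
    have h2 : ∀ j, s j q * s k0 p ≤ s k0 q * s j p := by
      intro j
      rw [hk0peq, hsp j]
      nlinarith [mul_nonneg (mul_nonneg (by linarith : (0:ℝ) ≤ 1 - e) hk0q.le) (hsx j)]
    have hqysub : q - y = α • (p - y) := by rw [← heqy]; module
    have hpxsub : p - x = e • (q - x) := by rw [← heqx]; module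
    have hqynorm : ‖q - y‖ = α * ‖p - y‖ := by
      rw [hqysub, norm_smul, Real.norm_eq_abs, abs_of_pos hα]
    have hpxnorm : ‖p - x‖ = e * ‖q - x‖ := by
      rw [hpxsub, norm_smul, Real.norm_eq_abs, abs_of_pos he]
    have hpy0 : ‖p - y‖ ≠ 0 := norm_ne_zero_iff.mpr (sub_ne_zero.mpr hpy)
    have hqx0 : ‖q - x‖ ≠ 0 := norm_ne_zero_iff.mpr (sub_ne_zero.mpr hqx)
    have hcr : (‖p - y‖ * ‖q - x‖) / (‖q - y‖ * ‖p - x‖) = 1 / (α * e) := by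
      rw [hqynorm, hpxnorm]
      field_simp
    have hHval : H p q = (1 / 2) * Real.log (1 / (α * e)) := by rw [hHeq, hcr]
    exact ⟨α, e, i0, k0, hα, hα1, he, he1, hi0p, hk0q, hne, hi0q, hk0peq, h1, h2, hHval⟩
  have hq_nonneg : ∀ q ∈ interior K, ∀ i, 0 ≤ s i q :=
    fun q hq i => (hmemK q).mp (interior_subset hq) i
  -- the key characterization
  have key : ∀ q, (q ∈ interior K ∧ H p q ≤ r) ↔
      ∀ i j : Fin m, i ≠ j → s i p * s j q ≤ E * (s j p * s i q) := by
    intro q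
    constructor
    · rintro ⟨hq, hHr⟩ i j hij
      by_cases hpq : p = q
      · subst hpq
        nlinarith [mul_nonneg ((hmemK p).mp hpK i) ((hmemK p).mp hpK j), hE1]
      · obtain ⟨α, e, i0, k0, hα, hα1, he, he1, hi0p, hk0q, hne, hi0q, hk0peq, h1, h2, hHval⟩ :=
          main q hq hpq
        have hαe : 0 < α * e := mul_pos hα he
        have hcrE : 1 / (α * e) ≤ E := by
          have hlog : Real.log (1 / (α * e)) ≤ 2 * r := by
            rw [hHval] at hHr; linarith
          have h0 : 0 < 1 / (α * e) := by positivity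
          calc 1 / (α * e) = Real.exp (Real.log (1 / (α * e))) := (Real.exp_log h0).symm
            _ ≤ Real.exp (2 * r) := Real.exp_le_exp.mpr hlog
            _ = E := hE_def.symm
        have hA : α * s i p ≤ s i q := by
          have h := h1 i; rw [hi0q] at h; nlinarith [hi0p]
        have hB : e * s j q ≤ s j p := by
          have h := h2 j; rw [hk0peq] at h; nlinarith [hk0q]
        have hsiq : 0 ≤ s i q := hq_nonneg q hq i
        have hsjq : 0 ≤ s j q := hq_nonneg q hq j
        have hsip : 0 ≤ s i p := (hmemK p).mp hpK i
        have hsjp : 0 ≤ s j p := (hmemK p).mp hpK j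
        have hcr' : 1 ≤ E * (α * e) := by
          rw [div_le_iff₀ hαe] at hcrE; linarith
        have hAB : (α * s i p) * (e * s j q) ≤ s i q * s j p :=
          mul_le_mul hA hB (mul_nonneg he.le hsjq) hsiq
        nlinarith [mul_le_mul_of_nonneg_left hAB hEpos.le,
                   mul_le_mul_of_nonneg_right hcr' (mul_nonneg hsip hsjq)]
    · intro hq
      have hqint : q ∈ interior K := by
        rw [hint q]
        by_contra hcon
        push_neg at hcon
        obtain ⟨j, hj, hjq⟩ := hcon
        have hsjp : 0 < s j p := hspos j hj
        have hall : ∀ i, s i q ≤ 0 := by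
          intro i
          by_cases hij : i = j
          · subst hij; exact hjq
          · have hji : j ≠ i := fun h => hij h.symm
            have h := hq j i hji
            have hsip : 0 ≤ s i p := (hmemK p).mp hpK i
            nlinarith [mul_nonneg hsip (neg_nonneg.mpr hjq), hEpos, hsjp]
        have hpq : p ≠ q := by
          intro h
          rw [h] at hsjp
          linarith [hall j]
        obtain ⟨R, hR⟩ := hKcomp.isBounded.subset_closedBall 0
        have hpq0 : (0:ℝ) < ‖p - q‖ := norm_pos_iff.mpr (sub_ne_zero.mpr hpq)
        set t := (|R| + ‖p‖ + 1) / ‖p - q‖ with ht_def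
        have ht : 0 ≤ t := by positivity
        have hmem : p + t • (p - q) ∈ K := by
          rw [hmemK]
          intro i
          have hexp : s i (p + t • (p - q)) = s i p + t * (s i p - s i q) := by
            simp only [hs_def]
            rw [inner_add_right, real_inner_smul_right, inner_sub_right]
            ring
          rw [hexp]
          have hnn : 0 ≤ s i p := (hmemK p).mp hpK i
          have hd : (0:ℝ) ≤ s i p - s i q := by linarith [hall i]
          nlinarith [mul_nonneg ht hd]
        have hball := hR hmem
        rw [Metric.mem_closedBall, dist_zero_right] at hball
        have h3 : (p + t • (p - q)) - p = t • (p - q) := add_sub_cancel_left p _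
        have hnorm := norm_sub_le (p + t • (p - q)) p
        rw [h3, norm_smul, Real.norm_eq_abs, abs_of_nonneg ht] at hnorm
        have htval : t * ‖p - q‖ = |R| + ‖p‖ + 1 := by
          rw [ht_def]; field_simp
        rw [htval] at hnorm
        have := le_abs_self R
        linarith
      refine ⟨hqint, ?_⟩
      by_cases hpq : p = q
      · subst hpq
        rw [hH.1 p hp]
        exact hr
      · obtain ⟨α, e, i0, k0, hα, hα1, he, he1, hi0p, hk0q, hne, hi0q, hk0peq, h1, h2, hHval⟩ :=
          main q hqint hpq
        have hpair := hq i0 k0 hne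
        rw [hi0q, hk0peq] at hpair
        have hcr' : 1 ≤ E * (α * e) := by nlinarith [mul_pos hi0p hk0q]
        have hαe : 0 < α * e := mul_pos hα he
        rw [hHval]
        have h0 : (0:ℝ) < 1 / (α * e) := by positivity
        have hle : 1 / (α * e) ≤ E := by rw [div_le_iff₀ hαe]; linarith
        have hlog : Real.log (1 / (α * e)) ≤ 2 * r := by
          calc Real.log (1 / (α * e)) ≤ Real.log E := Real.log_le_log h0 hle
            _ = 2 * r := by rw [hE_def]; rw [Real.log_exp]
        linarith
  -- halfspace representation of each constraint
  set A : Fin m × Fin m → Set (EuclideanSpace ℝ (Fin d)) :=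
    fun ij => {q | s ij.1 p * s ij.2 q ≤ E * (s ij.2 p * s ij.1 q)} with hA_def
  have hhalf : ∀ ij : Fin m × Fin m, A ij =
      {x | ⟪(E * s ij.2 p) • a ij.1 - (s ij.1 p) • a ij.2, x⟫ ≤
        E * s ij.2 p * b ij.1 - s ij.1 p * b ij.2} := by
    intro ij
    ext x
    simp only [hA_def, Set.mem_setOf_eq, hs_def, inner_sub_left, real_inner_smul_left]
    constructor <;> intro h <;> nlinarith [h]
  set F : Finset (Fin m × Fin m) := Finset.univ.offDiag with hF_def
  have hFcard : F.card = m * m - m := by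
    simp [hF_def, Finset.offDiag_card]
  have hrep : {q | q ∈ interior K ∧ H p q ≤ r} = ⋂ ij ∈ F, A ij := by
    ext q
    simp only [Set.mem_setOf_eq, Set.mem_iInter, hF_def, Finset.mem_offDiag, Finset.mem_univ,
      true_and, hA_def]
    rw [key q]
    constructor
    · rintro h ij hij
      exact h ij.1 ij.2 hij
    · intro h i j hij
      exact h (i, j) hij
  refine ⟨?_, ?_, ?_⟩
  · rw [hrep]
    refine convex_iInter fun ij => convex_iInter fun _ => ?_
    rw [hhalf ij]
    exact convex_halfSpace_le
      ⟨fun x y => inner_add_right _ _ _, fun t x => by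
        rw [real_inner_smul_right, smul_eq_mul]⟩ _
  · refine hKcomp.of_isClosed_subset ?_ ?_
    · rw [hrep]
      refine isClosed_iInter fun ij => isClosed_iInter fun _ => ?_
      rw [hhalf ij]
      exact isClosed_le (Continuous.inner continuous_const continuous_id) continuous_const
    · intro q hq
      exact interior_subset hq.1
  · refine ⟨F.card, le_of_eq (by rw [hFcard, Nat.mul_sub_one]), ?_⟩
    set eqv := F.equivFin with heqv
    refine ⟨fun i => (E * s ((eqv.symm i : Fin m × Fin m)).2 p) • a ((eqv.symm i : Fin m × Fin m)).1
        - (s ((eqv.symm i : Fin m × Fin m)).1 p) • a ((eqv.symm i : Fin m × Fin m)).2,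
      fun i => E * s ((eqv.symm i : Fin m × Fin m)).2 p * b ((eqv.symm i : Fin m × Fin m)).1
        - s ((eqv.symm i : Fin m × Fin m)).1 p * b ((eqv.symm i : Fin m × Fin m)).2, ?_⟩
    have hrep2 : {q | q ∈ interior K ∧ H p q ≤ r} = ⋂ i : Fin F.card, A (eqv.symm i) := by
      rw [hrep]
      ext q
      simp only [Set.mem_iInter]
      constructor
      · intro h i
        exact h _ (eqv.symm i).2
      · intro h ij hij
        have h2 := h (eqv ⟨ij, hij⟩)
        rwa [Equiv.symm_apply_apply] at h2
    rw [hrep2]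
    exact Set.iInter_congr fun i => hhalf _
end

section
/- Voronoi cells in the Hilbert metric are stars with respect to their defining sites: let K be a convex body in ℝ^d, let S be a finite set of points (sites) in the interior of K, and let p ∈ S. Then the Voronoi cell V(p) = { q ∈ interior(K) : H_K(q,p) ≤ H_K(q,p′) for all p′ ∈ S } is star-shaped with respect to p, i.e., for every q ∈ V(p) the line segment from p to q is contained in V(p). -/
open Set

theorem Real.log_div_add_log_div {a b c : ℝ} (ha : a ≠ 0) (hb : b ≠ 0) (hc : c ≠ 0) :
    Real.log (a / b) + Real.log (b / c) = Real.log (a / c) := by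
  rw [Real.log_div ha hb, Real.log_div hb hc, Real.log_div ha hc]
  ring

section OpenSegment

variable {V : Type*} [AddCommGroup V] [Module ℝ V] {a b c z : V}

theorem mem_openSegment_iff_exists_sub_eq_smul_sub :
    b ∈ openSegment ℝ a c ↔ ∃ t ∈ Ioo (0 : ℝ) 1, b - c = t • (a - c) := by
  rw [openSegment_symm, openSegment_eq_image']
  refine exists_congr fun t => and_congr_right fun _ => ?_
  rw [eq_comm, sub_eq_iff_eq_add']

theorem mem_openSegment_trans_left (hb : b ∈ openSegment ℝ a c) (hz : z ∈ openSegment ℝ a b) :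
    z ∈ openSegment ℝ a c := by
  rw [openSegment_eq_image'] at *
  obtain ⟨t, ht, rfl⟩ := hb
  obtain ⟨s, hs, rfl⟩ := hz
  refine ⟨s * t, ⟨mul_pos hs.1 ht.1, by nlinarith [ht.1, ht.2, hs.1, hs.2]⟩, ?_⟩
  module

theorem mem_openSegment_trans_left_right (hb : b ∈ openSegment ℝ a c)
    (hz : z ∈ openSegment ℝ a b) : b ∈ openSegment ℝ z c := by
  rw [openSegment_eq_image'] at *
  obtain ⟨t, ht, rfl⟩ := hb
  obtain ⟨s, hs, rfl⟩ := hz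
  have hst : 0 < 1 - s * t := by nlinarith [ht.1, ht.2, hs.1, hs.2]
  refine ⟨(t - s * t) / (1 - s * t), ⟨div_pos (by nlinarith [ht.1, hs.2]) hst,
    (div_lt_one hst).2 (by nlinarith [ht.2, hs.1])⟩, ?_⟩
  match_scalars
  · linear_combination -div_mul_cancel₀ (t - s * t) hst.ne'
  · linear_combination div_mul_cancel₀ (t - s * t) hst.ne'

theorem mem_segment_or_mem_segment_of_mem_openSegment {p q y₁ y₂ : V}
    (h₁ : q ∈ openSegment ℝ p y₁) (h₂ : q ∈ openSegment ℝ p y₂) :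
    y₁ ∈ segment ℝ p y₂ ∨ y₂ ∈ segment ℝ p y₁ := by
  rw [openSegment_eq_image'] at h₁ h₂
  obtain ⟨t₁, ht₁, hq₁⟩ := h₁
  obtain ⟨t₂, ht₂, hq₂⟩ := h₂
  have hy : ∀ {t y}, t ∈ Ioo (0 : ℝ) 1 → p + t • (y - p) = q → y = t⁻¹ • (q - p) +ᵥ p :=
    fun ht hq => by rw [← hq, vadd_eq_add, add_sub_cancel_left, inv_smul_smul₀ ht.1.ne',
      sub_add_cancel]
  simpa only [mem_segment_iff_wbtw, ← hy ht₁ hq₁, ← hy ht₂ hq₂] using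
    wbtw_or_wbtw_smul_vadd_of_nonneg p (q - p) (inv_nonneg.2 ht₁.1.le) (inv_nonneg.2 ht₂.1.le)

end OpenSegment

section NormedSpace

variable {V : Type*} [NormedAddCommGroup V] {K : Set V} {p u v y : V}

theorem norm_sub_pos_of_mem_interior_of_mem_frontier (hp : p ∈ interior K)
    (hy : y ∈ frontier K) : 0 < ‖p - y‖ :=
  norm_sub_pos_iff.2 (ne_of_mem_of_not_mem hp hy.2)

variable [NormedSpace ℝ V]

theorem norm_div_norm_eq_inv_of_sub_eq_smul_sub {t : ℝ} (huy : u ≠ y) (ht : 0 < t)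
    (h : v - y = t • (u - y)) : ‖u - y‖ / ‖v - y‖ = t⁻¹ := by
  rw [h, norm_smul, Real.norm_of_nonneg ht.le,
    div_mul_cancel_right₀ (norm_ne_zero_iff.2 (sub_ne_zero.2 huy))]

theorem log_norm_div_norm_nonneg (hv : v ∈ openSegment ℝ u y) :
    0 ≤ Real.log (‖u - y‖ / ‖v - y‖) := by
  rcases eq_or_ne u y with rfl | huy
  · simp
  obtain ⟨t, ht, hvy⟩ := mem_openSegment_iff_exists_sub_eq_smul_sub.1 hv
  rw [norm_div_norm_eq_inv_of_sub_eq_smul_sub huy ht.1 hvy, Real.log_inv, neg_nonneg]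
  exact Real.log_nonpos ht.1.le ht.2.le

theorem div_le_norm_div_norm_of_mem_openSegment (f : V →L[ℝ] ℝ) {s : ℝ} (hu : f u < s)
    (hy : f y ≤ s) (huy : u ≠ y) (hv : v ∈ openSegment ℝ u y) :
    (s - f u) / (s - f v) ≤ ‖u - y‖ / ‖v - y‖ := by
  obtain ⟨t, ht, hvy⟩ := mem_openSegment_iff_exists_sub_eq_smul_sub.1 hv
  have hfv : s - f v = t * (s - f u) + (1 - t) * (s - f y) := by
    have := congrArg f hvy
    simp only [map_sub, map_smul, smul_eq_mul] at this
    linarith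
  have hy' : 0 ≤ (1 - t) * (s - f y) := mul_nonneg (by linarith [ht.2]) (by linarith)
  rw [norm_div_norm_eq_inv_of_sub_eq_smul_sub huy ht.1 hvy, hfv,
    div_le_iff₀ (add_pos_of_pos_of_nonneg (mul_pos ht.1 (sub_pos.2 hu)) hy'), inv_mul_eq_div, le_div_iff₀ ht.1]
  linarith

theorem div_eq_norm_div_norm_of_mem_openSegment (f : V →L[ℝ] ℝ) (hu : f u ≠ f y)
    (hv : v ∈ openSegment ℝ u y) :
    (f y - f u) / (f y - f v) = ‖u - y‖ / ‖v - y‖ := by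
  obtain ⟨t, ht, hvy⟩ := mem_openSegment_iff_exists_sub_eq_smul_sub.1 hv
  have hfv : f y - f v = t * (f y - f u) := by
    have := congrArg f hvy
    simp only [map_sub, map_smul, smul_eq_mul] at this
    linarith
  rw [norm_div_norm_eq_inv_of_sub_eq_smul_sub (ne_of_apply_ne f hu) ht.1 hvy, hfv,
    div_mul_cancel_right₀ (sub_ne_zero.2 hu.symm)]

namespace Convex

variable (hK : Convex ℝ K)
include hK

theorem exists_forall_lt_interior_forall_le_closure (hK_int : (interior K).Nonempty)
    (hy : y ∉ interior K) :
    ∃ f : V →L[ℝ] ℝ, (∀ z ∈ interior K, f z < f y) ∧ ∀ z ∈ closure K, f z ≤ f y := by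
  obtain ⟨f, hf⟩ := geometric_hahn_banach_open_point hK.interior isOpen_interior hy
  refine ⟨f, hf, ?_⟩
  rw [← hK.closure_interior_eq_closure_of_nonempty_interior hK_int]
  exact closure_minimal (fun z hz => (hf z hz).le) (isClosed_le f.continuous continuous_const)

theorem eq_of_mem_segment_of_mem_frontier {z : V} (hp : p ∈ interior K) (hy : y ∈ closure K)
    (hz : z ∈ segment ℝ p y) (hzK : z ∈ frontier K) : z = y := by
  by_contra hzy
  have hpz : p ≠ z := ne_of_mem_of_not_mem hp hzK.2
  exact hzK.2 (hK.openSegment_interior_closure_subset_interior hp hy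
    (mem_openSegment_of_ne_left_right hpz (Ne.symm hzy) hz))

theorem eq_of_mem_openSegment_of_mem_frontier {q y₁ y₂ : V} (hp : p ∈ interior K)
    (hy₁ : y₁ ∈ frontier K) (hy₂ : y₂ ∈ frontier K) (h₁ : q ∈ openSegment ℝ p y₁)
    (h₂ : q ∈ openSegment ℝ p y₂) : y₁ = y₂ :=
  (mem_segment_or_mem_segment_of_mem_openSegment h₁ h₂).elim
    (fun h => hK.eq_of_mem_segment_of_mem_frontier hp (frontier_subset_closure hy₂) h hy₁)
    (fun h => (hK.eq_of_mem_segment_of_mem_frontier hp (frontier_subset_closure hy₁) h hy₂).symm)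

theorem log_norm_div_norm_le_add {a b c y₁ y₂ y₃ : V} (ha : a ∈ interior K)
    (hy₁ : y₁ ∈ frontier K) (hy₂ : y₂ ∈ frontier K) (hy₃ : y₃ ∈ frontier K)
    (hac : c ∈ openSegment ℝ a y₁) (hab : b ∈ openSegment ℝ a y₂)
    (hbc : c ∈ openSegment ℝ b y₃) :
    Real.log (‖a - y₁‖ / ‖c - y₁‖) ≤
      Real.log (‖a - y₂‖ / ‖b - y₂‖) + Real.log (‖b - y₃‖ / ‖c - y₃‖) := by
  obtain ⟨f, hf_int, hf_cl⟩ :=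
    hK.exists_forall_lt_interior_forall_le_closure ⟨a, ha⟩ hy₁.2
  have hb : b ∈ interior K :=
    hK.openSegment_interior_closure_subset_interior ha (frontier_subset_closure hy₂) hab
  have hc : c ∈ interior K :=
    hK.openSegment_interior_closure_subset_interior ha (frontier_subset_closure hy₁) hac
  have hfa := sub_pos.2 (hf_int a ha)
  have hfb := sub_pos.2 (hf_int b hb)
  have hfc := sub_pos.2 (hf_int c hc)
  calc Real.log (‖a - y₁‖ / ‖c - y₁‖)
      = Real.log ((f y₁ - f a) / (f y₁ - f c)) := by
        rw [div_eq_norm_div_norm_of_mem_openSegment f (hf_int a ha).ne hac]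
    _ = Real.log ((f y₁ - f a) / (f y₁ - f b)) + Real.log ((f y₁ - f b) / (f y₁ - f c)) :=
        (Real.log_div_add_log_div hfa.ne' hfb.ne' hfc.ne').symm
    _ ≤ Real.log (‖a - y₂‖ / ‖b - y₂‖) + Real.log (‖b - y₃‖ / ‖c - y₃‖) := by
        refine add_le_add (Real.log_le_log (div_pos hfa hfb) ?_)
          (Real.log_le_log (div_pos hfb hfc) ?_)
        · exact div_le_norm_div_norm_of_mem_openSegment f (hf_int a ha)
            (hf_cl y₂ (frontier_subset_closure hy₂)) (ne_of_mem_of_not_mem ha hy₂.2) hab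
        · exact div_le_norm_div_norm_of_mem_openSegment f (hf_int b hb)
            (hf_cl y₃ (frontier_subset_closure hy₃)) (ne_of_mem_of_not_mem hb hy₃.2) hbc

end Convex

end NormedSpace

namespace IsHilbertDist

variable {d : ℕ} {K : Set (EuclideanSpace ℝ (Fin d))}
  {H : EuclideanSpace ℝ (Fin d) → EuclideanSpace ℝ (Fin d) → ℝ}
  {a b c p q z : EuclideanSpace ℝ (Fin d)}

theorem exists_eq_log_add_log (hH : IsHilbertDist K H) (hp : p ∈ interior K)
    (hq : q ∈ interior K) (hpq : p ≠ q) :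
    ∃ x ∈ frontier K, ∃ y ∈ frontier K, p ∈ openSegment ℝ q x ∧ q ∈ openSegment ℝ p y ∧
      H p q = (Real.log (‖p - y‖ / ‖q - y‖) + Real.log (‖q - x‖ / ‖p - x‖)) / 2 := by
  obtain ⟨x, hx, y, hy, hpx, hqy, hHpq⟩ := hH.2 p hp q hq hpq
  refine ⟨x, hx, y, hy, openSegment_symm ℝ x q ▸ hpx, hqy, ?_⟩
  have npy := norm_sub_pos_of_mem_interior_of_mem_frontier hp hy
  have nqy := norm_sub_pos_of_mem_interior_of_mem_frontier hq hy
  have npx := norm_sub_pos_of_mem_interior_of_mem_frontier hp hx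
  have nqx := norm_sub_pos_of_mem_interior_of_mem_frontier hq hx
  rw [hHpq, ← div_mul_div_comm, Real.log_mul (div_pos npy nqy).ne' (div_pos nqx npx).ne']
  ring

theorem nonneg (hH : IsHilbertDist K H) (hp : p ∈ interior K) (hq : q ∈ interior K) :
    0 ≤ H p q := by
  rcases eq_or_ne p q with rfl | hpq
  · exact (hH.1 p hp).ge
  obtain ⟨x, -, y, -, hpx, hqy, hHpq⟩ := hH.exists_eq_log_add_log hp hq hpq
  rw [hHpq]
  exact div_nonneg (add_nonneg (log_norm_div_norm_nonneg hqy) (log_norm_div_norm_nonneg hpx))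
    zero_le_two

variable (hK : Convex ℝ K) (hH : IsHilbertDist K H)
include hK hH

theorem triangle (ha : a ∈ interior K) (hb : b ∈ interior K) (hc : c ∈ interior K) :
    H a c ≤ H a b + H b c := by
  rcases eq_or_ne a b with rfl | hab
  · simp [hH.1 a ha]
  rcases eq_or_ne b c with rfl | hbc
  · simp [hH.1 b hb]
  rcases eq_or_ne a c with rfl | hac
  · rw [hH.1 a ha]
    exact add_nonneg (hH.nonneg ha hb) (hH.nonneg hb ha)
  obtain ⟨x₁, hx₁, y₁, hy₁, hax₁, hcy₁, hHac⟩ := hH.exists_eq_log_add_log ha hc hac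
  obtain ⟨x₂, hx₂, y₂, hy₂, hax₂, hby₂, hHab⟩ := hH.exists_eq_log_add_log ha hb hab
  obtain ⟨x₃, hx₃, y₃, hy₃, hbx₃, hcy₃, hHbc⟩ := hH.exists_eq_log_add_log hb hc hbc
  have forward := hK.log_norm_div_norm_le_add ha hy₁ hy₂ hy₃ hcy₁ hby₂ hcy₃
  have backward := hK.log_norm_div_norm_le_add hc hx₁ hx₃ hx₂ hax₁ hbx₃ hax₂
  rw [hHac, hHab, hHbc]
  linarith

theorem eq_add_of_mem_openSegment (hp : p ∈ interior K) (hq : q ∈ interior K) (hpq : p ≠ q)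
    (hz : z ∈ openSegment ℝ p q) : H q p = H q z + H z p := by
  have hzq : z ≠ q := by rintro rfl; exact hpq (right_mem_openSegment_iff.1 hz)
  have hzp : z ≠ p := by rintro rfl; exact hpq (left_mem_openSegment_iff.1 hz)
  have hzqp : z ∈ openSegment ℝ q p := openSegment_symm ℝ p q ▸ hz
  have hzK : z ∈ interior K :=
    hK.interior.segment_subset hp hq (openSegment_subset_segment ℝ p q hz)
  obtain ⟨x, hx, y, hy, hqx, hpy, hHqp⟩ := hH.exists_eq_log_add_log hq hp hpq.symm
  obtain ⟨x₁, hx₁, y₁, hy₁, hqx₁, hzy₁, hHqz⟩ := hH.exists_eq_log_add_log hq hzK hzq.symm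
  obtain ⟨x₂, hx₂, y₂, hy₂, hzx₂, hpy₂, hHzp⟩ := hH.exists_eq_log_add_log hzK hp hzp
  obtain rfl : y = y₁ := hK.eq_of_mem_openSegment_of_mem_frontier hq hy hy₁
    (mem_openSegment_trans_left hpy hzqp) hzy₁
  obtain rfl : x = x₁ := hK.eq_of_mem_openSegment_of_mem_frontier hzK hx hx₁
    (mem_openSegment_trans_left_right hqx hz) hqx₁
  obtain rfl : x = x₂ := hK.eq_of_mem_openSegment_of_mem_frontier hp hx hx₂
    (mem_openSegment_trans_left hqx hz) hzx₂
  obtain rfl : y = y₂ := hK.eq_of_mem_openSegment_of_mem_frontier hzK hy hy₂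
    (mem_openSegment_trans_left_right hpy hzqp) hpy₂
  have hne : ∀ {u w}, u ∈ interior K → w ∈ frontier K → ‖u - w‖ ≠ 0 :=
    fun hu hw => (norm_sub_pos_of_mem_interior_of_mem_frontier hu hw).ne'
  rw [hHqp, hHqz, hHzp, ← Real.log_div_add_log_div (hne hq hy) (hne hzK hy) (hne hp hy),
    ← Real.log_div_add_log_div (hne hp hx) (hne hzK hx) (hne hq hx)]
  ring

theorem eq_add_of_mem_segment (hp : p ∈ interior K) (hq : q ∈ interior K)
    (hz : z ∈ segment ℝ p q) : H q p = H q z + H z p := by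
  rcases eq_or_ne z p with rfl | hzp
  · simp [hH.1 z hp]
  rcases eq_or_ne z q with rfl | hzq
  · simp [hH.1 z hq]
  have hpq : p ≠ q := by
    rintro rfl
    exact hzp (by simpa using hz)
  exact eq_add_of_mem_openSegment hK hH hp hq hpq
    (mem_openSegment_of_ne_left_right hzp.symm hzq.symm hz)

end IsHilbertDist

theorem hilbert_voronoi_cell_star_shaped_general {d : ℕ} (K : Set (EuclideanSpace ℝ (Fin d)))
    (hKconv : Convex ℝ K)
    (H : EuclideanSpace ℝ (Fin d) → EuclideanSpace ℝ (Fin d) → ℝ)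
    (hH : IsHilbertDist K H)
    (S : Set (EuclideanSpace ℝ (Fin d))) (hS : S ⊆ interior K)
    (p : EuclideanSpace ℝ (Fin d)) (hpS : p ∈ S) :
    ∀ q ∈ {z | z ∈ interior K ∧ ∀ p' ∈ S, H z p ≤ H z p'},
      segment ℝ p q ⊆ {z | z ∈ interior K ∧ ∀ p' ∈ S, H z p ≤ H z p'} := by
  rintro q ⟨hq, hq_cell⟩ z hz
  have hp : p ∈ interior K := hS hpS
  have hzK : z ∈ interior K := hKconv.interior.segment_subset hp hq hz
  refine ⟨hzK, fun p' hp' => ?_⟩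
  have hsplit := hH.eq_add_of_mem_segment hKconv hp hq hz
  have htriangle := hH.triangle hKconv hq hzK (hS hp')
  linarith [hq_cell p' hp']

/-- Voronoi cells in the Hilbert metric are star-shaped with respect to their
defining sites. -/
theorem hilbert_voronoi_cell_star_shaped {d : ℕ} (K : Set (EuclideanSpace ℝ (Fin d)))
    (hKcomp : IsCompact K) (hKconv : Convex ℝ K) (hKint : (interior K).Nonempty)
    (H : EuclideanSpace ℝ (Fin d) → EuclideanSpace ℝ (Fin d) → ℝ)
    (hH : IsHilbertDist K H)
    (S : Set (EuclideanSpace ℝ (Fin d))) (hSfin : S.Finite) (hS : S ⊆ interior K)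
    (p : EuclideanSpace ℝ (Fin d)) (hpS : p ∈ S) :
    ∀ q ∈ {z | z ∈ interior K ∧ ∀ p' ∈ S, H z p ≤ H z p'},
      segment ℝ p q ⊆ {z | z ∈ interior K ∧ ∀ p' ∈ S, H z p ≤ H z p'} :=
  hilbert_voronoi_cell_star_shaped_general K hKconv H hH S hS p hpS
end

section
/- Let K be a convex body in ℝ^d and let p, p′ be two distinct points in the interior of K. Then there exists exactly one point o in the open line segment between p and p′ such that H_K(o,p) = H_K(o,p′); that is, the (p,p′)-bisector meets the open segment pp′ in a unique point. -/
open Set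

section Line

variable {E : Type*} [AddCommGroup E] [Module ℝ E]

lemma lt_of_mem_openSegment_of_lt {u s t : ℝ} (hs : s ∈ openSegment ℝ u t) (hst : s < t) :
    u < s := by
  obtain ⟨α, β, hα, hβ, hαβ, rfl⟩ := hs
  obtain rfl : α = 1 - β := by linarith
  simp only [smul_eq_mul] at hst ⊢
  have hut : u < t := by nlinarith
  nlinarith

lemma lt_of_mem_openSegment_of_gt {u s t : ℝ} (hs : s ∈ openSegment ℝ u t) (hts : t < s) :
    s < u := by
  obtain ⟨α, β, hα, hβ, hαβ, rfl⟩ := hs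
  obtain rfl : α = 1 - β := by linarith
  simp only [smul_eq_mul] at hts ⊢
  have htu : t < u := by nlinarith
  nlinarith

lemma add_smul_mem_openSegment (c v : E) {a s t : ℝ} (ha : a ∈ openSegment ℝ s t) :
    c + a • v ∈ openSegment ℝ (c + s • v) (c + t • v) := by
  obtain ⟨α, β, hα, hβ, hαβ, rfl⟩ := ha
  exact ⟨α, β, hα, hβ, hαβ, by linear_combination (norm := module) hαβ • c⟩

lemma exists_eq_add_smul_of_mem_openSegment {c v x : E} {s t : ℝ}
    (h : c + s • v ∈ openSegment ℝ x (c + t • v)) :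
    ∃ u : ℝ, x = c + u • v ∧ s ∈ openSegment ℝ u t := by
  obtain ⟨α, β, hα, hβ, hαβ, heq⟩ := h
  refine ⟨(s - β * t) / α, ?_, α, β, hα, hβ, hαβ, ?_⟩
  · apply smul_right_injective E hα.ne'
    simp only [smul_add, smul_smul, mul_div_cancel₀ _ hα.ne']
    linear_combination (norm := module) heq - hαβ • c
  · simp only [smul_eq_mul]
    field_simp
    ring

variable [TopologicalSpace E] [IsTopologicalAddGroup E] [ContinuousConstSMul ℝ E]

theorem Convex.eq_of_add_smul_mem_frontier_of_lt {K : Set E} (hK : Convex ℝ K) {c v : E}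
    {s a b : ℝ} (hs : c + s • v ∈ interior K) (ha : c + a • v ∈ frontier K)
    (hb : c + b • v ∈ frontier K) (has : a < s) (hbs : b < s) : a = b := by
  by_contra hab
  wlog hlt : a < b generalizing a b
  · exact this hb ha hbs has (Ne.symm hab) ((not_lt.1 hlt).lt_of_ne (Ne.symm hab))
  have hmem : c + b • v ∈ openSegment ℝ (c + s • v) (c + a • v) := by
    refine add_smul_mem_openSegment c v ?_
    rw [openSegment_symm, openSegment_eq_Ioo (hlt.trans hbs)]
    exact ⟨hlt, hbs⟩
  exact hb.2 (hK.openSegment_interior_closure_subset_interior hs (frontier_subset_closure ha) hmem)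

theorem Convex.eq_of_add_smul_mem_frontier_of_gt {K : Set E} (hK : Convex ℝ K) {c v : E}
    {s a b : ℝ} (hs : c + s • v ∈ interior K) (ha : c + a • v ∈ frontier K)
    (hb : c + b • v ∈ frontier K) (hsa : s < a) (hsb : s < b) : a = b := by
  simp only [← neg_smul_neg _ v] at hs ha hb
  exact neg_injective <| hK.eq_of_add_smul_mem_frontier_of_lt hs ha hb (neg_lt_neg hsa)
    (neg_lt_neg hsb)

end Line

lemma norm_add_smul_sub_add_smul {E : Type*} [SeminormedAddCommGroup E] [NormedSpace ℝ E]
    (c v : E) (a b : ℝ) : ‖c + a • v - (c + b • v)‖ = |a - b| * ‖v‖ := by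
  rw [add_sub_add_left_eq_sub, ← sub_smul, norm_smul, Real.norm_eq_abs]

noncomputable def chordCoord (A B u : ℝ) : ℝ :=
  Real.log (u - A) - Real.log (B - u)

lemma chordCoord_neg (A B u : ℝ) : chordCoord (-B) (-A) (-u) = -chordCoord A B u := by
  simp only [chordCoord, sub_neg_eq_add, neg_add_eq_sub]
  ring

lemma chordCoord_strictMonoOn (A B : ℝ) : StrictMonoOn (chordCoord A B) (Ioo A B) := by
  intro u hu w hw huw
  have h₁ : Real.log (u - A) < Real.log (w - A) :=
    Real.log_lt_log (by linarith [hu.1]) (by linarith)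
  have h₂ : Real.log (B - w) < Real.log (B - u) :=
    Real.log_lt_log (by linarith [hw.2]) (by linarith)
  simp only [chordCoord]
  linarith

lemma continuousOn_chordCoord (A B : ℝ) : ContinuousOn (chordCoord A B) (Ioo A B) := by
  unfold chordCoord
  refine ContinuousOn.sub (ContinuousOn.log (by fun_prop) ?_) (ContinuousOn.log (by fun_prop) ?_)
  · intro u hu; linarith [hu.1]
  · intro u hu; linarith [hu.2]

lemma StrictMonoOn.existsUnique_mem_Ioo_eq_midpoint {f : ℝ → ℝ} {a b : ℝ} (hab : a < b)
    (hf : ContinuousOn f (Icc a b)) (hmono : StrictMonoOn f (Icc a b)) :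
    ∃! t, t ∈ Ioo a b ∧ f t = (f a + f b) / 2 := by
  have hfab : f a < f b := hmono (left_mem_Icc.2 hab.le) (right_mem_Icc.2 hab.le) hab
  obtain ⟨t, ht, hft⟩ := intermediate_value_Ioo hab.le hf
    (show (f a + f b) / 2 ∈ Ioo (f a) (f b) from ⟨by linarith, by linarith⟩)
  refine ⟨t, ⟨ht, hft⟩, fun s ⟨hs, hfs⟩ ↦ ?_⟩
  exact hmono.injOn (Ioo_subset_Icc_self hs) (Ioo_subset_Icc_self ht) (hfs.trans hft.symm)

section Hilbert

variable {d : ℕ} {K : Set (EuclideanSpace ℝ (Fin d))}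
  {H : EuclideanSpace ℝ (Fin d) → EuclideanSpace ℝ (Fin d) → ℝ}
  {c v : EuclideanSpace ℝ (Fin d)} {A B s t : ℝ}

theorem IsHilbertDist.apply_add_smul_of_lt (hH : IsHilbertDist K H) (hK : Convex ℝ K)
    (hA : c + A • v ∈ frontier K) (hB : c + B • v ∈ frontier K)
    (hs : c + s • v ∈ interior K) (ht : c + t • v ∈ interior K)
    (hAs : A < s) (hst : s < t) (htB : t < B) :
    H (c + s • v) (c + t • v) = (chordCoord A B t - chordCoord A B s) / 2 := by
  have hv : v ≠ 0 := by
    rintro rfl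
    simp only [smul_zero, add_zero] at hA hs
    exact hA.2 hs
  have hne : c + s • v ≠ c + t • v := fun h ↦
    hst.ne (smul_left_injective ℝ hv (add_left_cancel h))
  obtain ⟨x, hx, y, hy, hsx, hty, hH⟩ := hH.2 _ hs _ ht hne
  obtain ⟨u, rfl, hu⟩ := exists_eq_add_smul_of_mem_openSegment hsx
  obtain ⟨w, rfl, hw⟩ := exists_eq_add_smul_of_mem_openSegment (x := y)
    (s := t) (t := s) (openSegment_symm ℝ (c + s • v) y ▸ hty)
  obtain rfl : A = u := hK.eq_of_add_smul_mem_frontier_of_lt hs hA hx hAs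
    (lt_of_mem_openSegment_of_lt hu hst)
  obtain rfl : B = w := hK.eq_of_add_smul_mem_frontier_of_gt ht hB hy htB
    (lt_of_mem_openSegment_of_gt hw hst)
  have hsA : 0 < s - A := sub_pos.2 hAs
  have htA : 0 < t - A := sub_pos.2 (hAs.trans hst)
  have hBs : 0 < B - s := sub_pos.2 (hst.trans htB)
  have hBt : 0 < B - t := sub_pos.2 htB
  have hratio : |s - B| * ‖v‖ * (|t - A| * ‖v‖) / (|t - B| * ‖v‖ * (|s - A| * ‖v‖))
      = (t - A) * (B - s) / ((B - t) * (s - A)) := by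
    rw [abs_sub_comm s B, abs_sub_comm t B, abs_of_pos hsA, abs_of_pos htA, abs_of_pos hBs,
      abs_of_pos hBt]
    field_simp
  rw [hH, norm_add_smul_sub_add_smul, norm_add_smul_sub_add_smul, norm_add_smul_sub_add_smul,
    norm_add_smul_sub_add_smul, hratio, Real.log_div (mul_pos htA hBs).ne' (mul_pos hBt hsA).ne',
    Real.log_mul htA.ne' hBs.ne', Real.log_mul hBt.ne' hsA.ne', chordCoord, chordCoord]
  ring

theorem IsHilbertDist.apply_add_smul_of_gt (hH : IsHilbertDist K H) (hK : Convex ℝ K)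
    (hA : c + A • v ∈ frontier K) (hB : c + B • v ∈ frontier K)
    (hs : c + s • v ∈ interior K) (ht : c + t • v ∈ interior K)
    (hAs : A < s) (hst : s < t) (htB : t < B) :
    H (c + t • v) (c + s • v) = (chordCoord A B t - chordCoord A B s) / 2 := by
  simp only [← neg_smul_neg _ v] at hA hB hs ht ⊢
  rw [hH.apply_add_smul_of_lt hK hB hA ht hs (neg_lt_neg htB) (neg_lt_neg hst) (neg_lt_neg hAs),
    chordCoord_neg, chordCoord_neg]
  ring

end Hilbert

theorem hilbert_bisector_unique_on_segment_general {d : ℕ} (K : Set (EuclideanSpace ℝ (Fin d)))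
    (hKconv : Convex ℝ K)
    (H : EuclideanSpace ℝ (Fin d) → EuclideanSpace ℝ (Fin d) → ℝ)
    (hH : IsHilbertDist K H)
    (p p' : EuclideanSpace ℝ (Fin d)) (hp : p ∈ interior K) (hp' : p' ∈ interior K)
    (hne : p ≠ p') :
    ∃! o : EuclideanSpace ℝ (Fin d), o ∈ openSegment ℝ p p' ∧ H o p = H o p' := by
  obtain ⟨x, hx, y, hy, hpx, hp'y, -⟩ := hH.2 p hp p' hp' hne
  obtain ⟨A, rfl, hA⟩ := exists_eq_add_smul_of_mem_openSegment (c := p) (v := p' - p) (s := 0)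
    (t := 1) (by simpa using hpx)
  obtain ⟨B, rfl, hB⟩ := exists_eq_add_smul_of_mem_openSegment (c := p) (v := p' - p) (s := 1)
    (t := 0) (by rw [openSegment_symm] at hp'y; simpa using hp'y)
  have hA0 : A < 0 := lt_of_mem_openSegment_of_lt hA one_pos
  have hB1 : 1 < B := lt_of_mem_openSegment_of_gt hB one_pos
  have hint : ∀ t ∈ Icc (0 : ℝ) 1, p + t • (p' - p) ∈ interior K := by
    rintro t ⟨ht0, ht1⟩
    exact hKconv.interior.segment_subset hp hp'
      (segment_eq_image' ℝ p p' ▸ ⟨t, ⟨ht0, ht1⟩, rfl⟩)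
  have hbis : ∀ t ∈ Ioo (0 : ℝ) 1, H (p + t • (p' - p)) p = H (p + t • (p' - p)) p' ↔
      chordCoord A B t = (chordCoord A B 0 + chordCoord A B 1) / 2 := by
    rintro t ⟨ht0, ht1⟩
    have h₀ := hH.apply_add_smul_of_gt hKconv hx hy (hint 0 (by simp))
      (hint t ⟨ht0.le, ht1.le⟩) hA0 ht0 (ht1.trans hB1)
    have h₁ := hH.apply_add_smul_of_lt hKconv hx hy (hint t ⟨ht0.le, ht1.le⟩)
      (hint 1 (by simp)) (hA0.trans ht0) ht1 hB1
    simp only [zero_smul, add_zero, one_smul, add_sub_cancel] at h₀ h₁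
    rw [h₀, h₁]
    constructor <;> intro h <;> linarith
  have hIcc : Icc (0 : ℝ) 1 ⊆ Ioo A B := Icc_subset_Ioo hA0 hB1
  obtain ⟨t, ⟨ht, hbt⟩, huniq⟩ := StrictMonoOn.existsUnique_mem_Ioo_eq_midpoint one_pos
    ((continuousOn_chordCoord A B).mono hIcc) ((chordCoord_strictMonoOn A B).mono hIcc)
  rw [openSegment_eq_image']
  refine ⟨p + t • (p' - p), ⟨⟨t, ht, rfl⟩, (hbis t ht).2 hbt⟩, ?_⟩
  rintro _ ⟨⟨s, hs, rfl⟩, hbs⟩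
  rw [huniq s ⟨hs, (hbis s hs).1 hbs⟩]

/-- The Hilbert bisector of two distinct interior sites `p, p'` meets the open line
segment between them in exactly one point. -/
theorem hilbert_bisector_unique_on_segment {d : ℕ} (K : Set (EuclideanSpace ℝ (Fin d)))
    (hKcomp : IsCompact K) (hKconv : Convex ℝ K) (hKint : (interior K).Nonempty)
    (H : EuclideanSpace ℝ (Fin d) → EuclideanSpace ℝ (Fin d) → ℝ)
    (hH : IsHilbertDist K H)
    (p p' : EuclideanSpace ℝ (Fin d)) (hp : p ∈ interior K) (hp' : p' ∈ interior K)
    (hne : p ≠ p') :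
    ∃! o : EuclideanSpace ℝ (Fin d), o ∈ openSegment ℝ p p' ∧ H o p = H o p' :=
  hilbert_bisector_unique_on_segment_general K hKconv H hH p p' hp hp' hne
end

section
/- Let K be a convex body in ℝ², let p, p′ be distinct points in the interior of K, and let z be a point in the interior of K not lying on the line through p and p′. Let x and y be the two points where the line through z and p meets ∂K, ordered ⟨x,z,p,y⟩, and let x′ and y′ be the two points where the line through z and p′ meets ∂K, ordered ⟨x′,z,p′,y′⟩. Let ℓ_x be the line through x and x′, ℓ_p the line through p and p′, and ℓ_y the line through y and y′. Assume ℓ_x and ℓ_p are not parallel, and ℓ_y and ℓ_p are not parallel. Then H_K(z,p) = H_K(z,p′) if and only if the three lines ℓ_x, ℓ_p, and ℓ_y are concurrent (pass through a common point). -/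
section Segment

variable {𝕜 E : Type*} [Field 𝕜] [LinearOrder 𝕜] [IsStrictOrderedRing 𝕜]
  [AddCommGroup E] [Module 𝕜 E]

theorem exists_pos_eq_add_smul_sub_of_mem_openSegment {x c q : E} (h : c ∈ openSegment 𝕜 x q) :
    ∃ s : 𝕜, 0 < s ∧ x = c + s • (c - q) := by
  obtain ⟨α, β, hα, hβ, hαβ, rfl⟩ := h
  refine ⟨β / α, div_pos hβ hα, ?_⟩
  obtain rfl : α = 1 - β := by linear_combination hαβ
  match_scalars <;> field_simp <;> ring

variable [TopologicalSpace E] [IsTopologicalAddGroup E] [ContinuousConstSMul 𝕜 E]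

theorem Convex.add_smul_notMem_frontier_of_lt {K : Set E} (hK : Convex 𝕜 K) {z v : E}
    (hz : z ∈ interior K) {s t : 𝕜} (hs : 0 < s) (hst : s < t) (ht : z + t • v ∈ frontier K) :
    z + s • v ∉ frontier K := by
  have h0t : 0 < t := hs.trans hst
  have hmem : z + s • v ∈ openSegment 𝕜 z (z + t • v) := by
    refine ⟨1 - s / t, s / t, sub_pos.2 ((div_lt_one h0t).2 hst), div_pos hs h0t, by ring, ?_⟩
    match_scalars
    · field_simp; ring
    · field_simp
  exact fun hs' ↦ hs'.2 (hK.openSegment_interior_closure_subset_interior hz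
    (frontier_subset_closure ht) hmem)

theorem Convex.eq_of_add_smul_mem_frontier {K : Set E} (hK : Convex 𝕜 K) {z v : E}
    (hz : z ∈ interior K) {s t : 𝕜} (hs : 0 < s) (ht : 0 < t)
    (hsK : z + s • v ∈ frontier K) (htK : z + t • v ∈ frontier K) : s = t := by
  rcases lt_trichotomy s t with hst | rfl | hts
  · exact absurd hsK (hK.add_smul_notMem_frontier_of_lt hz hs hst htK)
  · rfl
  · exact absurd htK (hK.add_smul_notMem_frontier_of_lt hz ht hts hsK)

theorem Convex.eq_of_mem_frontier_of_mem_openSegment {K : Set E} (hK : Convex 𝕜 K) {c q x y : E}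
    (hc : c ∈ interior K) (hx : x ∈ frontier K) (hy : y ∈ frontier K)
    (hcx : c ∈ openSegment 𝕜 x q) (hcy : c ∈ openSegment 𝕜 y q) : x = y := by
  obtain ⟨s, hs, rfl⟩ := exists_pos_eq_add_smul_sub_of_mem_openSegment hcx
  obtain ⟨t, ht, rfl⟩ := exists_pos_eq_add_smul_sub_of_mem_openSegment hcy
  rw [hK.eq_of_add_smul_mem_frontier hc hs ht hx hy]

end Segment

section AffineFrame

variable {k V : Type*} [Field k] [AddCommGroup V] [Module k V] {z u u' : V} {α α' : k}

theorem exists_coords_of_mem_affineSpan_pair {w : V} (hw : w ∈ line[k, z + α • u, z + α' • u']) :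
    ∃ s t : k, w = z + s • u + t • u' ∧ α' * s + α * t = α * α' := by
  obtain ⟨r, rfl⟩ := mem_affineSpan_pair_iff_exists_lineMap_eq.1 hw
  refine ⟨(1 - r) * α, r * α', ?_, by ring⟩
  rw [AffineMap.lineMap_apply, vsub_eq_sub, vadd_eq_add]
  module

theorem add_smul_add_smul_mem_affineSpan_pair_iff (hu : LinearIndependent k ![u, u'])
    (hα' : α' ≠ 0) {s t : k} :
    z + s • u + t • u' ∈ line[k, z + α • u, z + α' • u'] ↔ α' * s + α * t = α * α' := by
  constructor
  · intro hw
    obtain ⟨s₁, t₁, hst₁, hline⟩ := exists_coords_of_mem_affineSpan_pair hw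
    obtain ⟨rfl, rfl⟩ := hu.eq_of_pair (by simpa only [add_assoc, add_right_inj] using hst₁)
    exact hline
  · intro hline
    refine mem_affineSpan_pair_iff_exists_lineMap_eq.2 ⟨t / α', ?_⟩
    rw [AffineMap.lineMap_apply, vsub_eq_sub, vadd_eq_add]
    match_scalars <;> field_simp
    · ring
    · linear_combination -hline

theorem exists_mem_chord_lines_iff (hu : LinearIndependent k ![u, u']) {a a' b b' : k}
    (ha' : a' ≠ 0) (hb' : 1 + b' ≠ 0) (haa' : a ≠ a') :
    (∃ w, w ∈ line[k, z + (-a) • u, z + (-a') • u'] ∧ w ∈ line[k, z + u, z + u'] ∧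
        w ∈ line[k, z + (1 + b) • u, z + (1 + b') • u']) ↔
      (1 + a) * (1 + b) * (a' * b') = (1 + a') * (1 + b') * (a * b) := by
  have hmem (α α' : k) (hα' : α' ≠ 0) (s t : k) :=
    add_smul_add_smul_mem_affineSpan_pair_iff (z := z) (α := α) hu hα' (s := s) (t := t)
  have hmid := hmem 1 1 one_ne_zero
  simp only [one_smul, mul_one, one_mul] at hmid
  constructor
  · rintro ⟨w, hx, hp, hy⟩
    obtain ⟨s, t, rfl, hst⟩ := exists_coords_of_mem_affineSpan_pair (α := (1 : k)) (α' := 1)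
      (by simpa only [one_smul] using hp)
    rw [hmem _ _ (neg_ne_zero.2 ha')] at hx
    rw [hmem _ _ hb'] at hy
    -- eliminate `t` with `hst`, then `s` between `hx` and `hy`
    linear_combination (b - b') * hx + (a - a') * hy + (-(b' - b) * a - (a - a') * (1 + b)) * hst
  · intro h
    have ha'a : a' - a ≠ 0 := sub_ne_zero.2 haa'.symm
    -- `z + (1 - r) • u + r • u'` is the intersection point of the first two lines
    obtain ⟨r, hr⟩ : ∃ r, r * (a' - a) = a' * (1 + a) := ⟨_, div_mul_cancel₀ _ ha'a⟩
    refine ⟨z + (1 - r) • u + r • u', ?_, ?_, ?_⟩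
    · rw [hmem _ _ (neg_ne_zero.2 ha')]
      linear_combination hr
    · rw [hmid]; ring
    · rw [hmem _ _ hb']
      apply mul_left_cancel₀ ha'a
      linear_combination (b - b') * hr - h

theorem linearIndependent_sub_of_notMem_affineSpan_pair {z p p' : V} (hpp' : p ≠ p')
    (hz : z ∉ line[k, p, p']) : LinearIndependent k ![p - z, p' - z] := by
  have h := affineIndependent_of_ne_of_notMem_of_mem_of_mem hpp' hz
    (left_mem_affineSpan_pair k p p') (right_mem_affineSpan_pair k p p')
  rw [affineIndependent_iff_linearIndependent_vsub k _ (0 : Fin 3),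
    ← linearIndependent_equiv (finSuccAboveEquiv (0 : Fin 3))] at h
  convert h using 1
  · ext i
    fin_cases i <;> rfl
  · rfl

theorem affineSpan_pair_add_smul_sub_parallel {c : k} (hc : c ≠ 0) (z p p' : V) :
    (line[k, z + c • (p - z), z + c • (p' - z)]).Parallel line[k, p, p'] := by
  rw [AffineSubspace.affineSpan_pair_parallel_iff_vectorSpan_eq, vectorSpan_pair, vectorSpan_pair,
    show z + c • (p - z) -ᵥ (z + c • (p' - z)) = c • (p -ᵥ p') by simp only [vsub_eq_sub]; module]
  exact Submodule.span_singleton_smul_eq (isUnit_iff_ne_zero.2 hc) _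

end AffineFrame

namespace IsHilbertDist

variable {d : ℕ} {K : Set (EuclideanSpace ℝ (Fin d))}
  {H : EuclideanSpace ℝ (Fin d) → EuclideanSpace ℝ (Fin d) → ℝ}

theorem apply_eq_of_chord (hH : IsHilbertDist K H) (hK : Convex ℝ K)
    {p q x y : EuclideanSpace ℝ (Fin d)} (hp : p ∈ interior K) (hq : q ∈ interior K) (hpq : p ≠ q)
    (hx : x ∈ frontier K) (hy : y ∈ frontier K)
    (hxq : p ∈ openSegment ℝ x q) (hpy : q ∈ openSegment ℝ p y) :
    H p q = 1 / 2 * Real.log ((‖p - y‖ * ‖q - x‖) / (‖q - y‖ * ‖p - x‖)) := by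
  obtain ⟨x₀, hx₀, y₀, hy₀, hx₀q, hpy₀, hHpq⟩ := hH.2 p hp q hq hpq
  rw [openSegment_symm] at hpy hpy₀
  rwa [hK.eq_of_mem_frontier_of_mem_openSegment hp hx hx₀ hxq hx₀q,
    hK.eq_of_mem_frontier_of_mem_openSegment hq hy hy₀ hpy hpy₀]

theorem exists_chord_coords (hH : IsHilbertDist K H) (hK : Convex ℝ K)
    {z p x y : EuclideanSpace ℝ (Fin d)} (hz : z ∈ interior K) (hp : p ∈ interior K) (hzp : z ≠ p)
    (hx : x ∈ frontier K) (hy : y ∈ frontier K)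
    (hxp : z ∈ openSegment ℝ x p) (hzy : p ∈ openSegment ℝ z y) :
    ∃ a b : ℝ, 0 < a ∧ 0 < b ∧ x = z + (-a) • (p - z) ∧ y = z + (1 + b) • (p - z) ∧
      H z p = 1 / 2 * Real.log ((1 + a) * (1 + b) / (a * b)) := by
  rw [hH.apply_eq_of_chord hK hz hp hzp hx hy hxp hzy]
  obtain ⟨a, ha, rfl⟩ := exists_pos_eq_add_smul_sub_of_mem_openSegment hxp
  obtain ⟨b, hb, rfl⟩ :=
    exists_pos_eq_add_smul_sub_of_mem_openSegment (openSegment_symm ℝ z _ ▸ hzy)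
  refine ⟨a, b, ha, hb, by module, by module, ?_⟩
  have hu : 0 < ‖p - z‖ := norm_pos_iff.2 (sub_ne_zero.2 hzp.symm)
  rw [show z - (p + b • (p - z)) = (-(1 + b)) • (p - z) by module,
    show p - (z + a • (z - p)) = (1 + a) • (p - z) by module,
    show p - (p + b • (p - z)) = (-b) • (p - z) by module,
    show z - (z + a • (z - p)) = a • (p - z) by module]
  simp only [norm_smul, Real.norm_eq_abs, abs_neg, abs_of_pos ha, abs_of_pos hb,
    abs_of_pos (by linarith : (0 : ℝ) < 1 + a), abs_of_pos (by linarith : (0 : ℝ) < 1 + b)]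
  field_simp

end IsHilbertDist

theorem hilbert_bisector_concurrency_general {K : Set (EuclideanSpace ℝ (Fin 2))}
    (hKconv : Convex ℝ K)
    (H : EuclideanSpace ℝ (Fin 2) → EuclideanSpace ℝ (Fin 2) → ℝ)
    (hH : IsHilbertDist K H)
    (p p' z : EuclideanSpace ℝ (Fin 2))
    (hp : p ∈ interior K) (hp' : p' ∈ interior K) (hz : z ∈ interior K)
    (hne : p ≠ p')
    (hzline : z ∉ affineSpan ℝ ({p, p'} : Set (EuclideanSpace ℝ (Fin 2))))
    (x y x' y' : EuclideanSpace ℝ (Fin 2))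
    (hx : x ∈ frontier K) (hy : y ∈ frontier K)
    (hx' : x' ∈ frontier K) (hy' : y' ∈ frontier K)
    (hord1 : z ∈ openSegment ℝ x p) (hord2 : p ∈ openSegment ℝ z y)
    (hord1' : z ∈ openSegment ℝ x' p') (hord2' : p' ∈ openSegment ℝ z y')
    (hnpar_x : ¬ AffineSubspace.Parallel
        (affineSpan ℝ ({x, x'} : Set (EuclideanSpace ℝ (Fin 2))))
        (affineSpan ℝ ({p, p'} : Set (EuclideanSpace ℝ (Fin 2))))) :
    H z p = H z p' ↔
      ∃ w : EuclideanSpace ℝ (Fin 2),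
        w ∈ affineSpan ℝ ({x, x'} : Set (EuclideanSpace ℝ (Fin 2))) ∧
        w ∈ affineSpan ℝ ({p, p'} : Set (EuclideanSpace ℝ (Fin 2))) ∧
        w ∈ affineSpan ℝ ({y, y'} : Set (EuclideanSpace ℝ (Fin 2))) := by
  have hzp : z ≠ p := fun h ↦ hzline (h ▸ left_mem_affineSpan_pair ℝ p p')
  have hzp' : z ≠ p' := fun h ↦ hzline (h ▸ right_mem_affineSpan_pair ℝ p p')
  obtain ⟨a, b, ha, hb, rfl, rfl, hHp⟩ := hH.exists_chord_coords hKconv hz hp hzp hx hy hord1 hord2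
  obtain ⟨a', b', ha', hb', rfl, rfl, hHp'⟩ :=
    hH.exists_chord_coords hKconv hz hp' hzp' hx' hy' hord1' hord2'
  have haa' : a ≠ a' := by
    rintro rfl
    exact hnpar_x (affineSpan_pair_add_smul_sub_parallel (neg_ne_zero.2 ha.ne') z p p')
  have hconc := exists_mem_chord_lines_iff (z := z) (b := b)
    (linearIndependent_sub_of_notMem_affineSpan_pair hne hzline) ha'.ne'
    (by positivity : 1 + b' ≠ 0) haa'
  rw [add_sub_cancel, add_sub_cancel] at hconc
  rw [hconc, hHp, hHp', mul_right_inj' (by norm_num),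
    Real.log_injOn_pos.eq_iff (Set.mem_Ioi.2 (by positivity)) (Set.mem_Ioi.2 (by positivity)),
    div_eq_div_iff (by positivity) (by positivity)]

/-- Characterization of Hilbert bisector points in the plane: with `x, z, p, y` and
`x', z, p', y'` the chords through `z` and the two sites, `z` is on the `(p,p')`-bisector
iff the lines `xx'`, `pp'`, and `yy'` are concurrent. -/
theorem hilbert_bisector_concurrency {K : Set (EuclideanSpace ℝ (Fin 2))}
    (hKcomp : IsCompact K) (hKconv : Convex ℝ K) (hKint : (interior K).Nonempty)
    (H : EuclideanSpace ℝ (Fin 2) → EuclideanSpace ℝ (Fin 2) → ℝ)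
    (hH : IsHilbertDist K H)
    (p p' z : EuclideanSpace ℝ (Fin 2))
    (hp : p ∈ interior K) (hp' : p' ∈ interior K) (hz : z ∈ interior K)
    (hne : p ≠ p')
    (hzline : z ∉ affineSpan ℝ ({p, p'} : Set (EuclideanSpace ℝ (Fin 2))))
    (x y x' y' : EuclideanSpace ℝ (Fin 2))
    (hx : x ∈ frontier K) (hy : y ∈ frontier K)
    (hx' : x' ∈ frontier K) (hy' : y' ∈ frontier K)
    (hord1 : z ∈ openSegment ℝ x p) (hord2 : p ∈ openSegment ℝ z y)
    (hord1' : z ∈ openSegment ℝ x' p') (hord2' : p' ∈ openSegment ℝ z y')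
    (hnpar_x : ¬ AffineSubspace.Parallel
        (affineSpan ℝ ({x, x'} : Set (EuclideanSpace ℝ (Fin 2))))
        (affineSpan ℝ ({p, p'} : Set (EuclideanSpace ℝ (Fin 2)))))
    (hnpar_y : ¬ AffineSubspace.Parallel
        (affineSpan ℝ ({y, y'} : Set (EuclideanSpace ℝ (Fin 2))))
        (affineSpan ℝ ({p, p'} : Set (EuclideanSpace ℝ (Fin 2))))) :
    H z p = H z p' ↔
      ∃ w : EuclideanSpace ℝ (Fin 2),
        w ∈ affineSpan ℝ ({x, x'} : Set (EuclideanSpace ℝ (Fin 2))) ∧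
        w ∈ affineSpan ℝ ({p, p'} : Set (EuclideanSpace ℝ (Fin 2))) ∧
        w ∈ affineSpan ℝ ({y, y'} : Set (EuclideanSpace ℝ (Fin 2))) :=
  hilbert_bisector_concurrency_general hKconv H hH p p' z hp hp' hz hne hzline x y x' y' hx hy hx'
    hy' hord1 hord2 hord1' hord2' hnpar_x
end

section
/- Let x, y, x′, y′, p, p′, o, α, α′ be real numbers with α ≠ 0, α′ ≠ 0 and with all of the following denominators nonzero: (x−p)(o−y), (x′−p′)(o−y′), (x−p)((o+α)−y), (x′−p′)((o+α′)−y′). Suppose the cross-ratio equalities ((x−o)(p−y))/((x−p)(o−y)) = ((x′−o)(p′−y′))/((x′−p′)(o−y′)) and ((x−(o+α))(p−y))/((x−p)((o+α)−y)) = ((x′−(o+α′))(p′−y′))/((x′−p′)((o+α′)−y′)) both hold. Define A = (p−y)(x′−p′) − (p′−y′)(x−p), B = (x−o)(p−y)(x′−p′) + (p′−y′)(x−p)(o−y), and C = (p−y)(x′−p′)(o−y′) + (x′−o)(p′−y′)(x−p). Then A = B/α − C/α′; that is, the reciprocals 1/α and 1/α′ satisfy a linear relation with coefficients A, B, C determined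 by x, y, x′, y′, p, p′, o. -/
/-- The algebraic identity underlying the parameterization of a Hilbert bisector
segment: if `(o, p; y, x) = (o, p'; y', x')` and `(o + α, p; y, x) = (o + α', p'; y', x')`
as cross ratios, then `1/α` and `1/α'` satisfy the linear relation `A = B/α - C/α'`. -/
theorem bisector_segment_linear_relation
    (x y x' y' p p' o α α' : ℝ) (hα : α ≠ 0) (hα' : α' ≠ 0)
    (h1 : (x - p) * (o - y) ≠ 0) (h2 : (x' - p') * (o - y') ≠ 0)
    (h3 : (x - p) * ((o + α) - y) ≠ 0) (h4 : (x' - p') * ((o + α') - y') ≠ 0)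
    (hcr1 : ((x - o) * (p - y)) / ((x - p) * (o - y)) =
      ((x' - o) * (p' - y')) / ((x' - p') * (o - y')))
    (hcr2 : ((x - (o + α)) * (p - y)) / ((x - p) * ((o + α) - y)) =
      ((x' - (o + α')) * (p' - y')) / ((x' - p') * ((o + α') - y'))) :
    (p - y) * (x' - p') - (p' - y') * (x - p) =
      ((x - o) * (p - y) * (x' - p') + (p' - y') * (x - p) * (o - y)) / α -
        ((p - y) * (x' - p') * (o - y') + (x' - o) * (p' - y') * (x - p)) / α' := by
  rw [div_eq_div_iff h1 h2] at hcr1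
  rw [div_eq_div_iff h3 h4] at hcr2
  have key : α * α' * ((p - y) * (x' - p') - (p' - y') * (x - p)) =
      α' * ((x - o) * (p - y) * (x' - p') + (p' - y') * (x - p) * (o - y)) -
        α * ((p - y) * (x' - p') * (o - y') + (x' - o) * (p' - y') * (x - p)) := by
    linear_combination hcr1 - hcr2
  field_simp
  linear_combination key
end
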